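/- arXiv:1810.05013 — 3 statements merged into one kernel-verified Lean document; each statement's English description precedes it below -/
import Mathlib

section
/- Let Δ ⊆ ℝ be an interval and g: Δ → ℝ a C^3 diffeomorphism onto g(Δ) with negative Schwarzian derivative. If J ⊆ Δ is a subinterval such that g(Δ) contains the η-scaled neighborhood of g(J) (both components of N(g(J),η) \ g(J) have length η·diam(g(J))), then for all x, y ∈ J one has (η/(1+η))^2 ≤ g'(y)/g'(x) ≤ ((1+η)/η)^2. -/
/-!
Assume `g' > 0` (otherwise replace `g` by `-g`, which has the same Schwarzian).
Then `φ := √g' ∘ g⁻¹` is concave on `g(Δ)`: by Cauchy's mean value theorem its difference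
quotients are values of `(√g')' / g' = g'' / (2 g'^{3/2})`, whose derivative is
`S(g) / (2 √g') < 0`. A nonnegative concave function satisfies `η φ(v) ≤ (1 + η) φ(u)` as soon
as `u + η (u - v)` still lies in its domain, and for `u, v ∈ g(J)` this point lies in the
`η`-neighbourhood of `g(J)`. Squaring gives the bounds on `g'(y) / g'(x)`.
-/

open Set

noncomputable def SchwarzianWithin (f : ℝ → ℝ) (s : Set ℝ) (x : ℝ) : ℝ :=
  iteratedDerivWithin 3 f s x / derivWithin f s x
    - 3 / 2 * (iteratedDerivWithin 2 f s x / derivWithin f s x) ^ 2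

open Function

theorem ConcaveOn.mul_le_one_add_mul {s : Set ℝ} {φ : ℝ → ℝ} (hφ : ConcaveOn ℝ s φ)
    {η u v : ℝ} (hη : 0 ≤ η) (hv : v ∈ s) (hp : u + η * (u - v) ∈ s)
    (hφp : 0 ≤ φ (u + η * (u - v))) : η * φ v ≤ (1 + η) * φ u := by
  have h1η : 0 < 1 + η := by linarith
  have hu : (1 + η)⁻¹ • (u + η * (u - v)) + (η / (1 + η)) • v = u := by
    simp only [smul_eq_mul]; field_simp; ring
  have hcomb := hφ.2 hp hv (inv_nonneg.2 h1η.le) (div_nonneg hη h1η.le) (by field_simp)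
  rw [hu, smul_eq_mul, smul_eq_mul] at hcomb
  field_simp at hcomb
  linarith

theorem exists_mem_Ioo_div_sub_eq_div_deriv {f g f' g' : ℝ → ℝ} {a b : ℝ} (hab : a < b)
    (hfc : ContinuousOn f (Icc a b)) (hgc : ContinuousOn g (Icc a b))
    (hf : ∀ x ∈ Ioo a b, HasDerivAt f (f' x) x) (hg : ∀ x ∈ Ioo a b, HasDerivAt g (g' x) x)
    (hg' : ∀ x ∈ Ioo a b, g' x ≠ 0) (hgab : g a ≠ g b) :
    ∃ c ∈ Ioo a b, (f b - f a) / (g b - g a) = f' c / g' c := by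
  obtain ⟨c, hc, h⟩ := exists_ratio_hasDerivAt_eq_ratio_slope f f' hab hfc hf g g' hgc hg
  refine ⟨c, hc, ?_⟩
  rw [div_eq_div_iff (sub_ne_zero.2 hgab.symm) (hg' c hc)]
  linarith

theorem concaveOn_image_comp_invFunOn {Δ : Set ℝ} {f g f' g' : ℝ → ℝ} (hΔ : Convex ℝ Δ)
    (hgm : StrictMonoOn g Δ) (hfc : ContinuousOn f Δ) (hgc : ContinuousOn g Δ)
    (hf : ∀ x ∈ interior Δ, HasDerivAt f (f' x) x) (hg : ∀ x ∈ interior Δ, HasDerivAt g (g' x) x)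
    (hg' : ∀ x ∈ interior Δ, g' x ≠ 0) (hV : AntitoneOn (fun x => f' x / g' x) (interior Δ)) :
    ConcaveOn ℝ (g '' Δ) (f ∘ invFunOn g Δ) := by
  have himage : Convex ℝ (g '' Δ) :=
    (isPreconnected_iff_ordConnected.1 (hΔ.isPreconnected.image g hgc)).convex
  have hslope : ∀ ⦃s t⦄, s ∈ Δ → t ∈ Δ → s < t →
      ∃ ξ ∈ Ioo s t, ξ ∈ interior Δ ∧ (f t - f s) / (g t - g s) = f' ξ / g' ξ := by
    intro s t hs ht hst
    have hsub : Icc s t ⊆ Δ := hΔ.ordConnected.out hs ht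
    have hIoo : Ioo s t ⊆ interior Δ :=
      interior_maximal (Ioo_subset_Icc_self.trans hsub) isOpen_Ioo
    obtain ⟨ξ, hξ, h⟩ := exists_mem_Ioo_div_sub_eq_div_deriv hst (hfc.mono hsub)
      (hgc.mono hsub) (fun x hx => hf x (hIoo hx)) (fun x hx => hg x (hIoo hx))
      (fun x hx => hg' x (hIoo hx)) (hgm hs ht hst).ne
    exact ⟨ξ, hξ, hIoo hξ, h⟩
  refine concaveOn_iff_slope_anti_adjacent.2 ⟨himage, ?_⟩
  rintro _ y _ ⟨r, hr, rfl⟩ ⟨t, ht, rfl⟩ hry hyt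
  obtain ⟨s, hs, rfl⟩ := himage.ordConnected.out ⟨r, hr, rfl⟩ ⟨t, ht, rfl⟩ ⟨hry.le, hyt.le⟩
  have hinv := hgm.injOn.leftInvOn_invFunOn
  simp only [comp_apply, hinv hr, hinv hs, hinv ht]
  obtain ⟨ξ, hξ, hξΔ, h₁⟩ := hslope hr hs ((hgm.lt_iff_lt hr hs).1 hry)
  obtain ⟨ζ, hζ, hζΔ, h₂⟩ := hslope hs ht ((hgm.lt_iff_lt hs ht).1 hyt)
  rw [h₁, h₂]
  exact hV hξΔ hζΔ (hξ.2.trans hζ.1).le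

theorem HasDerivAt.div_sqrt_div {d₁ d₂ d₃ : ℝ → ℝ} {x : ℝ} (h₁ : HasDerivAt d₁ (d₂ x) x)
    (h₂ : HasDerivAt d₂ (d₃ x) x) (hx : 0 < d₁ x) :
    HasDerivAt (fun t => d₂ t / (2 * √(d₁ t)) / d₁ t)
      ((d₃ x / d₁ x - 3 / 2 * (d₂ x / d₁ x) ^ 2) / (2 * √(d₁ x))) x := by
  refine ((h₂.fun_div ((h₁.sqrt hx.ne').const_mul 2) (by positivity)).fun_div h₁
    hx.ne').congr_deriv ?_
  field_simp
  rw [Real.sq_sqrt hx.le]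
  ring

theorem IsPreconnected.forall_pos_or_forall_neg {X : Type*} [TopologicalSpace X] {s : Set X}
    {f : X → ℝ} (hs : IsPreconnected s) (hf : ContinuousOn f s) (h0 : ∀ x ∈ s, f x ≠ 0) :
    (∀ x ∈ s, 0 < f x) ∨ ∀ x ∈ s, f x < 0 := by
  by_contra! h
  obtain ⟨⟨a, ha, hfa⟩, b, hb, hfb⟩ := h
  obtain ⟨z, hz, hfz⟩ := hs.intermediate_value ha hb hf ⟨hfa, hfb⟩
  exact h0 z hz hfz

theorem DifferentiableOn.hasDerivAt_derivWithin {f : ℝ → ℝ} {s : Set ℝ}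
    (hf : DifferentiableOn ℝ f s) {x : ℝ} (hx : x ∈ interior s) :
    HasDerivAt f (derivWithin f s x) x :=
  (hf x (interior_subset hx)).hasDerivWithinAt.hasDerivAt (mem_interior_iff_mem_nhds.1 hx)

theorem strictMonoOn_of_derivWithin_pos {f : ℝ → ℝ} {s : Set ℝ} (hs : Convex ℝ s)
    (hf : DifferentiableOn ℝ f s) (hpos : ∀ x ∈ s, 0 < derivWithin f s x) : StrictMonoOn f s :=
  strictMonoOn_of_hasDerivWithinAt_pos hs hf.continuousOn
    (fun _ hx => (hf.hasDerivAt_derivWithin hx).hasDerivWithinAt)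
    (fun x hx => hpos x (interior_subset hx))

@[simp]
theorem schwarzianWithin_fun_neg (g : ℝ → ℝ) (s : Set ℝ) (x : ℝ) :
    SchwarzianWithin (fun t => -g t) s x = SchwarzianWithin g s x := by
  simp only [SchwarzianWithin, iteratedDerivWithin_fun_neg, derivWithin.fun_neg, neg_div_neg_eq]

section Koebe

variable {g : ℝ → ℝ} {Δ : Set ℝ}

theorem concaveOn_sqrt_derivWithin_comp_invFunOn (hΔ : Convex ℝ Δ) (hΔu : UniqueDiffOn ℝ Δ)
    (hg : ContDiffOn ℝ 3 g Δ) (hpos : ∀ x ∈ Δ, 0 < derivWithin g Δ x)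
    (hS : ∀ x ∈ Δ, SchwarzianWithin g Δ x < 0) :
    ConcaveOn ℝ (g '' Δ) ((fun x => √(derivWithin g Δ x)) ∘ invFunOn g Δ) := by
  set g₁ := derivWithin g Δ
  set g₂ := derivWithin g₁ Δ
  have hc₁ : ContDiffOn ℝ 2 g₁ Δ := hg.derivWithin hΔu (by norm_num)
  have hc₂ : ContDiffOn ℝ 1 g₂ Δ := hc₁.derivWithin hΔu (by norm_num)
  have hV : ∀ x ∈ interior Δ, HasDerivAt (fun t => g₂ t / (2 * √(g₁ t)) / g₁ t)
      (SchwarzianWithin g Δ x / (2 * √(g₁ x))) x := by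
    intro x hx
    rw [SchwarzianWithin, iteratedDerivWithin_eq_iterate, iteratedDerivWithin_eq_iterate]
    exact ((hc₁.differentiableOn (by norm_num)).hasDerivAt_derivWithin hx).div_sqrt_div
      ((hc₂.differentiableOn (by norm_num)).hasDerivAt_derivWithin hx)
      (hpos x (interior_subset hx))
  refine concaveOn_image_comp_invFunOn hΔ
    (strictMonoOn_of_derivWithin_pos hΔ (hg.differentiableOn (by norm_num)) hpos)
    hc₁.continuousOn.sqrt hg.continuousOn
    (fun x hx => (((hc₁.differentiableOn (by norm_num)).hasDerivAt_derivWithin hx).sqrt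
      (hpos x (interior_subset hx)).ne'))
    (fun x hx => (hg.differentiableOn (by norm_num)).hasDerivAt_derivWithin hx)
    (fun x hx => (hpos x (interior_subset hx)).ne') ?_
  refine antitoneOn_of_hasDerivWithinAt_nonpos hΔ.interior
    (fun x hx => (hV x hx).continuousAt.continuousWithinAt)
    (fun x hx => (hV x (interior_subset hx)).hasDerivWithinAt) fun x hx => ?_
  have hx' := interior_subset (interior_subset hx)
  exact div_nonpos_of_nonpos_of_nonneg (hS x hx').le (by positivity)

theorem sq_div_le_div_and_div_le_sq {η A B : ℝ} (hη : 0 < η) (hA : 0 < A) (hB : 0 < B)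
    (h₁ : η * √B ≤ (1 + η) * √A) (h₂ : η * √A ≤ (1 + η) * √B) :
    (η / (1 + η)) ^ 2 ≤ B / A ∧ B / A ≤ ((1 + η) / η) ^ 2 := by
  have hsA := Real.sqrt_pos.2 hA
  rw [show B / A = (√B / √A) ^ 2 by rw [div_pow, Real.sq_sqrt hA.le, Real.sq_sqrt hB.le]]
  constructor <;> apply pow_le_pow_left₀ (by positivity)
  · rw [div_le_div_iff₀ (by positivity) hsA]; linarith
  · rw [div_le_div_iff₀ hsA hη]; linarith

theorem distortion_bounds_of_derivWithin_pos (hΔ : Convex ℝ Δ) (hΔu : UniqueDiffOn ℝ Δ)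
    (hg : ContDiffOn ℝ 3 g Δ) (hpos : ∀ x ∈ Δ, 0 < derivWithin g Δ x)
    (hS : ∀ x ∈ Δ, SchwarzianWithin g Δ x < 0) {η x y : ℝ} (hη : 0 < η) (hx : x ∈ Δ)
    (hy : y ∈ Δ) (hpx : g x + η * (g x - g y) ∈ g '' Δ)
    (hpy : g y + η * (g y - g x) ∈ g '' Δ) :
    (η / (1 + η)) ^ 2 ≤ derivWithin g Δ y / derivWithin g Δ x ∧
      derivWithin g Δ y / derivWithin g Δ x ≤ ((1 + η) / η) ^ 2 := by
  have hφ := concaveOn_sqrt_derivWithin_comp_invFunOn hΔ hΔu hg hpos hS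
  have hinv := (strictMonoOn_of_derivWithin_pos hΔ (hg.differentiableOn (by norm_num))
    hpos).injOn.leftInvOn_invFunOn
  have key : ∀ {u v}, u ∈ Δ → v ∈ Δ → g u + η * (g u - g v) ∈ g '' Δ →
      η * √(derivWithin g Δ v) ≤ (1 + η) * √(derivWithin g Δ u) := by
    intro u v hu hv hp
    simpa only [comp_apply, hinv hu, hinv hv] using
      hφ.mul_le_one_add_mul hη.le (mem_image_of_mem g hv) hp (Real.sqrt_nonneg _)
  exact sq_div_le_div_and_div_le_sq hη (hpos x hx) (hpos y hy) (key hx hy hpx) (key hy hx hpy)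

end Koebe

theorem bounded_distortion_general (g : ℝ → ℝ) (Δ : Set ℝ) (η : ℝ) (hη : 0 < η)
    (hΔ : Δ.OrdConnected) (hΔu : UniqueDiffOn ℝ Δ)
    (hg : ContDiffOn ℝ 3 g Δ)
    (hg' : ∀ x ∈ Δ, derivWithin g Δ x ≠ 0)
    (hS : ∀ x ∈ Δ, SchwarzianWithin g Δ x < 0)
    (a b : ℝ) (hJ : Set.Icc a b ⊆ Δ)
    (c d : ℝ) (hcd : g '' Set.Icc a b = Set.Icc c d)
    (hN : Set.Icc (c - η * (d - c)) (d + η * (d - c)) ⊆ g '' Δ) :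
    ∀ x ∈ Set.Icc a b, ∀ y ∈ Set.Icc a b,
      (η / (1 + η)) ^ 2 ≤ derivWithin g Δ y / derivWithin g Δ x ∧
      derivWithin g Δ y / derivWithin g Δ x ≤ ((1 + η) / η) ^ 2 := by
  have hp : ∀ x ∈ Icc a b, ∀ y ∈ Icc a b, g x + η * (g x - g y) ∈ g '' Δ := by
    intro x hx y hy
    obtain ⟨hcx, hxd⟩ : g x ∈ Icc c d := hcd ▸ mem_image_of_mem g hx
    obtain ⟨hcy, hyd⟩ : g y ∈ Icc c d := hcd ▸ mem_image_of_mem g hy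
    exact hN ⟨by nlinarith, by nlinarith⟩
  intro x hx y hy
  rcases hΔ.convex.isPreconnected.forall_pos_or_forall_neg
    (hg.derivWithin hΔu (m := 2) (by norm_num)).continuousOn hg' with hpos | hneg
  · exact distortion_bounds_of_derivWithin_pos hΔ.convex hΔu hg hpos hS hη (hJ hx) (hJ hy)
      (hp x hx y hy) (hp y hy x hx)
  · have hG : ∀ t, derivWithin (fun t => -g t) Δ t = -derivWithin g Δ t :=
      fun _ => derivWithin.fun_neg
    have hGp : ∀ u ∈ Icc a b, ∀ v ∈ Icc a b,
        -g u + η * (-g u - -g v) ∈ (fun t => -g t) '' Δ := by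
      intro u hu v hv
      obtain ⟨t, ht, hgt⟩ := hp u hu v hv
      exact ⟨t, ht, by simp only [hgt]; ring⟩
    have := distortion_bounds_of_derivWithin_pos hΔ.convex hΔu hg.neg
      (fun t ht => by rw [hG]; linarith [hneg t ht]) (by simpa using hS) hη (hJ hx) (hJ hy)
      (hGp x hx y hy) (hGp y hy x hx)
    rwa [hG, hG, neg_div_neg_eq] at this

/-- General Bounded Distortion Property: if `g : Δ → ℝ` is a `C³` diffeomorphism onto its
image with negative Schwarzian derivative, `J = [a,b] ⊆ Δ` with `g(J) = [c,d]`, and `g(Δ)`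
contains the `η`-scaled neighborhood of `g(J)`, then
`(η/(1+η))² ≤ g'(y)/g'(x) ≤ ((1+η)/η)²` for all `x, y ∈ J`. -/
theorem bounded_distortion (g : ℝ → ℝ) (Δ : Set ℝ) (η : ℝ) (hη : 0 < η)
    (hΔ : Δ.OrdConnected) (hΔu : UniqueDiffOn ℝ Δ)
    (hg : ContDiffOn ℝ 3 g Δ) (hinj : Set.InjOn g Δ)
    (hg' : ∀ x ∈ Δ, derivWithin g Δ x ≠ 0)
    (hS : ∀ x ∈ Δ, SchwarzianWithin g Δ x < 0)
    (a b : ℝ) (hab : a ≤ b) (hJ : Set.Icc a b ⊆ Δ)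
    (c d : ℝ) (hcd : g '' Set.Icc a b = Set.Icc c d)
    (hN : Set.Icc (c - η * (d - c)) (d + η * (d - c)) ⊆ g '' Δ) :
    ∀ x ∈ Set.Icc a b, ∀ y ∈ Set.Icc a b,
      (η / (1 + η)) ^ 2 ≤ derivWithin g Δ y / derivWithin g Δ x ∧
      derivWithin g Δ y / derivWithin g Δ x ≤ ((1 + η) / η) ^ 2 :=
  bounded_distortion_general g Δ η hη hΔ hΔu hg hg' hS a b hJ c d hcd hN
end

section
/- Let Ω be a probability space with complete probability measure m, and X a Polish space. Then every random probability measure ν on Ω × X with marginal m is inner and outer regular with respect to closed and open random sets: for any measurable A ⊆ Ω × X, ν(A) = sup{ν(F): F ⊆ A closed random set} = inf{ν(G): G ⊇ A open random set}. -/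
/-!
Call a set `A ⊆ Ω × X` approximable if for every `ε > 0` it lies between a closed
random set `F` and an open random set `G` with `ν (G \ F) ≤ ε`. Approximable sets form a
σ-algebra: complements swap the roles of `F` and `G`, and for a countable union one takes the
union of the `G n` together with a *finite* union of the `F n` carrying all but `ε` of the mass.
Every rectangle `s ×ˢ t` with `s` measurable and `t` open is approximable, since in a metric space
`t` is an increasing union of closed sets `Kₙ` and `ν (s ×ˢ Kₙ) → ν (s ×ˢ t)`. Hence every
measurable set is approximable, which gives both regularity statements at once.
-/

open MeasureTheory Set ENNReal

theorem Monotone.exists_measure_iUnion_sdiff_le {α : Type*} [MeasurableSpace α]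
    {μ : Measure α} [IsFiniteMeasure μ] {S : ℕ → Set α} (hS : Monotone S)
    (hSm : ∀ n, NullMeasurableSet (S n) μ) {ε : ℝ≥0∞} (hε : ε ≠ 0) :
    ∃ N, μ ((⋃ n, S n) \ S N) ≤ ε := by
  have hlt : μ (⋃ n, S n) < ⨆ n, μ (S n) + ε := by
    rw [← ENNReal.iSup_add, ← hS.measure_iUnion]
    exact ENNReal.lt_add_right (measure_ne_top _ _) hε
  obtain ⟨N, hN⟩ := lt_iSup_iff.1 hlt
  exact ⟨N, (measure_sdiff_le_iff_le_add (hSm N) (subset_iUnion S N) (measure_ne_top _ _)).2 hN.le⟩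

namespace MeasureTheory

section

variable {Ω X : Type*} [MeasurableSpace Ω] [TopologicalSpace X] [MeasurableSpace X]

def IsClosedRandomSet (F : Set (Ω × X)) : Prop :=
  MeasurableSet F ∧ ∀ ω, IsClosed (Prod.mk ω ⁻¹' F)

def IsOpenRandomSet (G : Set (Ω × X)) : Prop :=
  MeasurableSet G ∧ ∀ ω, IsOpen (Prod.mk ω ⁻¹' G)

theorem isClosedRandomSet_empty : IsClosedRandomSet (∅ : Set (Ω × X)) :=
  ⟨.empty, fun _ => isClosed_empty⟩

theorem isOpenRandomSet_empty : IsOpenRandomSet (∅ : Set (Ω × X)) :=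
  ⟨.empty, fun _ => isOpen_empty⟩

theorem IsClosedRandomSet.compl {F : Set (Ω × X)} (hF : IsClosedRandomSet F) :
    IsOpenRandomSet Fᶜ :=
  ⟨hF.1.compl, fun ω => (hF.2 ω).isOpen_compl⟩

theorem IsOpenRandomSet.compl {G : Set (Ω × X)} (hG : IsOpenRandomSet G) :
    IsClosedRandomSet Gᶜ :=
  ⟨hG.1.compl, fun ω => (hG.2 ω).isClosed_compl⟩

theorem isOpenRandomSet_iUnion {ι : Type*} [Countable ι] {G : ι → Set (Ω × X)}
    (hG : ∀ i, IsOpenRandomSet (G i)) : IsOpenRandomSet (⋃ i, G i) := by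
  refine ⟨.iUnion fun i => (hG i).1, fun ω => ?_⟩
  rw [preimage_iUnion]
  exact isOpen_iUnion fun i => (hG i).2 ω

theorem isClosedRandomSet_biUnion {ι : Type*} {s : Set ι} (hs : s.Finite)
    {F : ι → Set (Ω × X)} (hF : ∀ i ∈ s, IsClosedRandomSet (F i)) :
    IsClosedRandomSet (⋃ i ∈ s, F i) := by
  refine ⟨.biUnion hs.countable fun i hi => (hF i hi).1, fun ω => ?_⟩
  rw [preimage_iUnion₂]
  exact hs.isClosed_biUnion fun i hi => (hF i hi).2 ω

theorem isClosedRandomSet_prod [OpensMeasurableSpace X] {s : Set Ω} {t : Set X}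
    (hs : MeasurableSet s) (ht : IsClosed t) : IsClosedRandomSet (s ×ˢ t) := by
  classical
  refine ⟨hs.prod ht.measurableSet, fun ω => ?_⟩
  rw [mk_preimage_prod_right_eq_if]
  split_ifs
  exacts [ht, isClosed_empty]

theorem isOpenRandomSet_prod [OpensMeasurableSpace X] {s : Set Ω} {t : Set X}
    (hs : MeasurableSet s) (ht : IsOpen t) : IsOpenRandomSet (s ×ˢ t) := by
  classical
  refine ⟨hs.prod ht.measurableSet, fun ω => ?_⟩
  rw [mk_preimage_prod_right_eq_if]
  split_ifs
  exacts [ht, isOpen_empty]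

def IsRandomSetApproximable (ν : Measure (Ω × X)) (A : Set (Ω × X)) : Prop :=
  ∀ ε ≠ 0, ∃ F G, IsClosedRandomSet F ∧ IsOpenRandomSet G ∧ F ⊆ A ∧ A ⊆ G ∧ ν (G \ F) ≤ ε

variable {ν : Measure (Ω × X)}

theorem isRandomSetApproximable_empty : IsRandomSetApproximable ν ∅ := fun _ _ =>
  ⟨∅, ∅, isClosedRandomSet_empty, isOpenRandomSet_empty, Subset.rfl, Subset.rfl, by simp⟩

theorem IsRandomSetApproximable.compl {A : Set (Ω × X)} (hA : IsRandomSetApproximable ν A) :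
    IsRandomSetApproximable ν Aᶜ := by
  intro ε hε
  obtain ⟨F, G, hF, hG, hFA, hAG, hGF⟩ := hA ε hε
  refine ⟨Gᶜ, Fᶜ, hG.compl, hF.compl, compl_subset_compl.2 hAG, compl_subset_compl.2 hFA, ?_⟩
  rwa [compl_sdiff_compl]

variable [IsFiniteMeasure ν]

theorem isRandomSetApproximable_iUnion {A : ℕ → Set (Ω × X)}
    (hA : ∀ n, IsRandomSetApproximable ν (A n)) : IsRandomSetApproximable ν (⋃ n, A n) := by
  intro ε hε
  have hε2 : ε / 2 ≠ 0 := by simpa using hε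
  obtain ⟨δ, hδ, hδε⟩ := ENNReal.exists_pos_sum_of_countable' hε2 ℕ
  choose F G hF hG hFA hAG hGF using fun n => hA n (δ n) (hδ n).ne'
  have hFacc (N : ℕ) : IsClosedRandomSet (accumulate F N) := by
    simpa only [accumulate_def, mem_Iic] using
      isClosedRandomSet_biUnion (finite_Iic N) fun n _ => hF n
  obtain ⟨N, hN⟩ := monotone_accumulate.exists_measure_iUnion_sdiff_le (μ := ν)
    (fun n => (hFacc n).1.nullMeasurableSet) hε2
  rw [iUnion_accumulate] at hN
  refine ⟨accumulate F N, ⋃ n, G n, hFacc N, isOpenRandomSet_iUnion hG,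
    (accumulate_subset_iUnion N).trans (iUnion_mono hFA), iUnion_mono hAG, ?_⟩
  have hcover : (⋃ n, G n) \ accumulate F N ⊆ (⋃ n, G n \ F n) ∪ ((⋃ n, F n) \ accumulate F N) := by
    rintro p ⟨hpG, hpF⟩
    obtain ⟨n, hn⟩ := mem_iUnion.1 hpG
    by_cases h : p ∈ F n
    exacts [Or.inr ⟨mem_iUnion.2 ⟨n, h⟩, hpF⟩, Or.inl (mem_iUnion.2 ⟨n, hn, h⟩)]
  calc ν ((⋃ n, G n) \ accumulate F N)
      ≤ ν (⋃ n, G n \ F n) + ν ((⋃ n, F n) \ accumulate F N) :=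
        (measure_mono hcover).trans (measure_union_le _ _)
    _ ≤ ∑' n, δ n + ε / 2 := by
        gcongr
        exact (measure_iUnion_le _).trans (ENNReal.tsum_le_tsum hGF)
    _ ≤ ε := by grw [hδε, ENNReal.add_halves]

@[reducible]
def randomSetApproximableSets (ν : Measure (Ω × X)) [IsFiniteMeasure ν] :
    MeasurableSpace (Ω × X) where
  MeasurableSet' := IsRandomSetApproximable ν
  measurableSet_empty := isRandomSetApproximable_empty
  measurableSet_compl _ := IsRandomSetApproximable.compl
  measurableSet_iUnion _ := isRandomSetApproximable_iUnion

theorem IsRandomSetApproximable.exists_measure_le_add {A : Set (Ω × X)}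
    (hA : IsRandomSetApproximable ν A) {ε : ℝ≥0∞} (hε : ε ≠ 0) :
    ∃ F G, IsClosedRandomSet F ∧ IsOpenRandomSet G ∧ F ⊆ A ∧ A ⊆ G ∧ ν G ≤ ν F + ε := by
  obtain ⟨F, G, hF, hG, hFA, hAG, hGF⟩ := hA ε hε
  exact ⟨F, G, hF, hG, hFA, hAG, (measure_sdiff_le_iff_le_add hF.1.nullMeasurableSet
    (hFA.trans hAG) (measure_ne_top _ _)).1 hGF⟩

theorem IsRandomSetApproximable.measure_eq_sSup {A : Set (Ω × X)}
    (hA : IsRandomSetApproximable ν A) :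
    ν A = sSup {v | ∃ F, IsClosedRandomSet F ∧ F ⊆ A ∧ v = ν F} := by
  refine le_antisymm (ENNReal.le_of_forall_pos_le_add fun ε hε _ => ?_) (sSup_le ?_)
  · obtain ⟨F, G, hF, -, hFA, hAG, hGF⟩ :=
      hA.exists_measure_le_add (ε := ε) (by exact_mod_cast hε.ne')
    calc ν A ≤ ν G := measure_mono hAG
      _ ≤ ν F + ε := hGF
      _ ≤ _ := by gcongr; exact le_sSup ⟨F, hF, hFA, rfl⟩
  · rintro _ ⟨F, -, hFA, rfl⟩
    exact measure_mono hFA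

theorem IsRandomSetApproximable.measure_eq_sInf {A : Set (Ω × X)}
    (hA : IsRandomSetApproximable ν A) :
    ν A = sInf {v | ∃ G, IsOpenRandomSet G ∧ A ⊆ G ∧ v = ν G} := by
  refine le_antisymm (le_sInf ?_) (ENNReal.le_of_forall_pos_le_add fun ε hε _ => ?_)
  · rintro _ ⟨G, -, hAG, rfl⟩
    exact measure_mono hAG
  · obtain ⟨F, G, -, hG, hFA, hAG, hGF⟩ :=
      hA.exists_measure_le_add (ε := ε) (by exact_mod_cast hε.ne')
    refine sInf_le_of_le ⟨G, hG, hAG, rfl⟩ ?_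
    calc ν G ≤ ν F + ε := hGF
      _ ≤ ν A + ε := by gcongr

end

variable {Ω X : Type*} [MeasurableSpace Ω] [PseudoEMetricSpace X] [MeasurableSpace X]
  {ν : Measure (Ω × X)} [IsFiniteMeasure ν]

theorem isRandomSetApproximable_prod [OpensMeasurableSpace X] {s : Set Ω} {t : Set X}
    (hs : MeasurableSet s) (ht : IsOpen t) : IsRandomSetApproximable ν (s ×ˢ t) := by
  intro ε hε
  obtain ⟨K, hKc, hKt, hK_iUnion, hK_mono⟩ := ht.exists_iUnion_isClosed
  have hmono : Monotone fun n => s ×ˢ K n := fun _ _ h => prod_mono_right (hK_mono h)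
  obtain ⟨N, hN⟩ := hmono.exists_measure_iUnion_sdiff_le (μ := ν)
    (fun n => (hs.prod (hKc n).measurableSet).nullMeasurableSet) hε
  rw [← prod_iUnion, hK_iUnion] at hN
  exact ⟨s ×ˢ K N, s ×ˢ t, isClosedRandomSet_prod hs (hKc N), isOpenRandomSet_prod hs ht,
    prod_mono_right (hKt N), Subset.rfl, hN⟩

theorem _root_.MeasurableSet.isRandomSetApproximable [BorelSpace X] {A : Set (Ω × X)}
    (hA : MeasurableSet A) : IsRandomSetApproximable ν A := by
  suffices Prod.instMeasurableSpace ≤ randomSetApproximableSets ν from this A hA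
  refine sup_le (MeasurableSpace.comap_le_iff_le_map.2 fun s hs => ?_)
    (MeasurableSpace.comap_le_iff_le_map.2 ?_)
  · show IsRandomSetApproximable ν (Prod.fst ⁻¹' s)
    rw [← prod_univ]
    exact isRandomSetApproximable_prod hs isOpen_univ
  · refine BorelSpace.measurable_eq.trans_le (MeasurableSpace.generateFrom_le fun t ht => ?_)
    show IsRandomSetApproximable ν (Prod.snd ⁻¹' t)
    rw [← univ_prod]
    exact isRandomSetApproximable_prod .univ ht

end MeasureTheory

theorem randomMeasure_regular_general {Ω X : Type*} [MeasurableSpace Ω]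
    [MetricSpace X]
    [MeasurableSpace X] [BorelSpace X]
    (ν : Measure (Ω × X)) [IsProbabilityMeasure ν]
    (A : Set (Ω × X)) (hA : MeasurableSet A) :
    ν A = sSup {v : ℝ≥0∞ | ∃ F : Set (Ω × X), MeasurableSet F ∧
        (∀ ω : Ω, IsClosed {x : X | (ω, x) ∈ F}) ∧ F ⊆ A ∧ v = ν F} ∧
    ν A = sInf {v : ℝ≥0∞ | ∃ G : Set (Ω × X), MeasurableSet G ∧
        (∀ ω : Ω, IsOpen {x : X | (ω, x) ∈ G}) ∧ A ⊆ G ∧ v = ν G} := by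
  have hA' := hA.isRandomSetApproximable (ν := ν)
  constructor
  · simpa only [IsClosedRandomSet, and_assoc, preimage] using hA'.measure_eq_sSup
  · simpa only [IsOpenRandomSet, and_assoc, preimage] using hA'.measure_eq_sInf

/-- Every random probability measure `ν` on `Ω × X` (with `X` Polish and marginal `m`,
`m` complete) is inner regular with respect to closed random sets and outer regular with
respect to open random sets: a closed (resp. open) random set is a product-measurable
subset of `Ω × X` all of whose fibers are closed (resp. open). -/
theorem randomMeasure_regular {Ω X : Type*} [MeasurableSpace Ω]
    [MetricSpace X] [TopologicalSpace.SeparableSpace X] [CompleteSpace X]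
    [MeasurableSpace X] [BorelSpace X]
    (m : Measure Ω) [IsProbabilityMeasure m] [m.IsComplete]
    (ν : Measure (Ω × X)) [IsProbabilityMeasure ν]
    (hmarg : ν.map Prod.fst = m)
    (A : Set (Ω × X)) (hA : MeasurableSet A) :
    ν A = sSup {v : ℝ≥0∞ | ∃ F : Set (Ω × X), MeasurableSet F ∧
        (∀ ω : Ω, IsClosed {x : X | (ω, x) ∈ F}) ∧ F ⊆ A ∧ v = ν F} ∧
    ν A = sInf {v : ℝ≥0∞ | ∃ G : Set (Ω × X), MeasurableSet G ∧
        (∀ ω : Ω, IsOpen {x : X | (ω, x) ∈ G}) ∧ A ⊆ G ∧ v = ν G} :=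
  randomMeasure_regular_general ν A hA
end

section
/- If a set X ⊆ ℝ is porous (there is c ∈ (0,1) such that for every x ∈ X and every r ∈ (0,1) there exists y with B(y, cr) ⊆ B(x,r) \ X), then the Hausdorff dimension of X is strictly less than 1. -/
/-!
Porosity at scale `ℓ ≤ 1` puts a gap of length `c ℓ / 3` into every interval of length `ℓ`,
so once `M ≥ 6 / c` the gap swallows one of the `M` grid subintervals of length `ℓ / M`, and
the remaining `M - 1` cover what `X` meets. Iterating, `X ∩ [a, a + 1]` is covered by
`(M - 1) ^ n` intervals of length `M⁻¹ ^ n`, so its `logb M (M - 1)`-dimensional Hausdorff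
measure is at most `1`; covering `ℝ` by countably many unit intervals gives
`dimH X ≤ logb M (M - 1) < 1`.
-/

open Set Metric MeasureTheory Filter Topology
open scoped ENNReal

theorem inv_pow_rpow_logb {b x : ℝ} (hb : 0 < b) (hb1 : b ≠ 1) (hx : 0 < x) (n : ℕ) :
    (b⁻¹ ^ n) ^ Real.logb b x = (x ^ n)⁻¹ := by
  rw [inv_pow, Real.inv_rpow (by positivity), ← Real.rpow_natCast, ← Real.rpow_mul hb.le,
    mul_comm, Real.rpow_mul hb.le, Real.rpow_logb hb hb1 hx, Real.rpow_natCast]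

section Covers

variable {E : Type*} [EMetricSpace E] {s : Set E} {M : ℝ} {N : ℕ}

theorem hausdorffMeasure_logb_le_one_of_covers [MeasurableSpace E] [BorelSpace E]
    (hM : 1 < M) (hN : 0 < N)
    (hcover : ∀ n : ℕ, ∃ t : Finset (Set E), t.card ≤ N ^ n ∧
      (∀ u ∈ t, ediam u ≤ ENNReal.ofReal (M⁻¹ ^ n)) ∧ s ⊆ ⋃₀ ↑t) :
    μH[Real.logb M N] s ≤ 1 := by
  choose t hcard hdiam hsub using hcover
  have hd : 0 ≤ Real.logb M N := Real.logb_nonneg hM (Nat.one_le_cast.2 hN)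
  have hr : Tendsto (fun n => ENNReal.ofReal (M⁻¹ ^ n)) atTop (𝓝 0) := by
    simpa using ENNReal.tendsto_ofReal (tendsto_pow_atTop_nhds_zero_of_lt_one
      (inv_nonneg.2 (by linarith)) (inv_lt_one_of_one_lt₀ hM))
  refine (Measure.hausdorffMeasure_le_liminf_sum _ s _ hr (fun n (u : t n) => (u : Set E))
    (.of_forall fun n u => hdiam n u u.2)
    (.of_forall fun n => (hsub n).trans sUnion_eq_iUnion.subset)).trans ?_
  refine liminf_le_of_frequently_le' (.of_forall fun n => ?_)
  calc ∑ u : t n, ediam (u : Set E) ^ Real.logb M N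
      ≤ ∑ _u : t n, ENNReal.ofReal (M⁻¹ ^ n) ^ Real.logb M N :=
        Finset.sum_le_sum fun u _ => ENNReal.rpow_le_rpow (hdiam n u u.2) hd
    _ = (t n).card * ((N : ℝ≥0∞) ^ n)⁻¹ := by
        rw [Finset.sum_const, Finset.card_univ, Fintype.card_coe, nsmul_eq_mul,
          ENNReal.ofReal_rpow_of_nonneg (by positivity) hd,
          inv_pow_rpow_logb (by linarith) hM.ne' (by exact_mod_cast hN),
          ENNReal.ofReal_inv_of_pos (by positivity)]
        norm_cast
    _ ≤ (N : ℝ≥0∞) ^ n * ((N : ℝ≥0∞) ^ n)⁻¹ := by gcongr; exact_mod_cast hcard n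
    _ = 1 := ENNReal.mul_inv_cancel (by positivity) (by simp)

theorem dimH_le_logb_of_covers (hM : 1 < M) (hN : 0 < N)
    (hcover : ∀ n : ℕ, ∃ t : Finset (Set E), t.card ≤ N ^ n ∧
      (∀ u ∈ t, ediam u ≤ ENNReal.ofReal (M⁻¹ ^ n)) ∧ s ⊆ ⋃₀ ↑t) :
    dimH s ≤ ENNReal.ofReal (Real.logb M N) := by
  borelize E
  have hμ := hausdorffMeasure_logb_le_one_of_covers hM hN hcover
  rw [← Real.coe_toNNReal _ (Real.logb_nonneg hM (Nat.one_le_cast.2 hN))] at hμ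
  exact dimH_le_of_hausdorffMeasure_ne_top (ne_top_of_le_ne_top ENNReal.one_ne_top hμ)

end Covers

section Grid

variable {a g u v x : ℝ} {M : ℕ}

theorem exists_lt_mem_Icc_grid (hg : 0 < g) (hM : 0 < M) (hx : x ∈ Icc a (a + M * g)) :
    ∃ j < M, x ∈ Icc (a + j * g) (a + (j + 1) * g) := by
  have hxa : 0 ≤ (x - a) / g := div_nonneg (by linarith [hx.1]) hg.le
  rcases lt_or_ge ⌊(x - a) / g⌋₊ M with hlt | hge
  · refine ⟨_, hlt, ?_, ?_⟩
    · linarith [(le_div_iff₀ hg).1 (Nat.floor_le hxa)]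
    · linarith [(div_lt_iff₀ hg).1 (Nat.lt_floor_add_one ((x - a) / g))]
  · refine ⟨M - 1, by omega, ?_, ?_⟩
    · have : ((M - 1 : ℕ) : ℝ) ≤ (x - a) / g :=
        le_trans (by exact_mod_cast (by omega : M - 1 ≤ ⌊(x - a) / g⌋₊)) (Nat.floor_le hxa)
      linarith [(le_div_iff₀ hg).1 this]
    · rw [Nat.cast_sub hM, Nat.cast_one, sub_add_cancel]
      exact hx.2

theorem exists_Icc_grid_subset (hg : 0 < g) (hau : a ≤ u) (huv : u + 2 * g ≤ v) :
    ∃ i : ℕ, Icc (a + i * g) (a + (i + 1) * g) ⊆ Icc u v := by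
  have hua : 0 ≤ (u - a) / g := div_nonneg (by linarith) hg.le
  refine ⟨⌈(u - a) / g⌉₊, Icc_subset_Icc ?_ ?_⟩
  · linarith [(div_le_iff₀ hg).1 (Nat.le_ceil ((u - a) / g))]
  · have := mul_lt_mul_of_pos_right (Nat.ceil_lt_add_one hua) hg
    rw [add_mul, div_mul_cancel₀ _ hg.ne'] at this
    linarith

theorem exists_finset_grid_cover_diff (hg : 0 < g) (hsub : Icc u v ⊆ Icc a (a + M * g))
    (huv : u + 2 * g ≤ v) :
    ∃ t : Finset ℝ, t.card ≤ M - 1 ∧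
      Icc a (a + M * g) \ Icc u v ⊆ ⋃ y ∈ t, Icc y (y + g) := by
  have huv' : u ≤ v := by linarith
  have hau : a ≤ u := (hsub (left_mem_Icc.2 huv')).1
  have hva : v ≤ a + M * g := (hsub (right_mem_Icc.2 huv')).2
  obtain ⟨i, hi⟩ := exists_Icc_grid_subset hg hau huv
  have hiM : i < M := by
    have : (i + 1) * g ≤ M * g := by linarith [(hi (right_mem_Icc.2 (by nlinarith))).2]
    exact_mod_cast (le_of_mul_le_mul_right this hg : (i : ℝ) + 1 ≤ M)
  refine ⟨((Finset.range M).erase i).image fun j : ℕ => a + j * g, ?_, ?_⟩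
  · refine Finset.card_image_le.trans ?_
    rw [Finset.card_erase_of_mem (Finset.mem_range.2 hiM), Finset.card_range]
  · rintro x ⟨hx, hxuv⟩
    obtain ⟨j, hjM, hxj⟩ := exists_lt_mem_Icc_grid hg (by omega) hx
    have hji : j ≠ i := by rintro rfl; exact hxuv (hi hxj)
    refine mem_iUnion₂.2 ⟨a + j * g, ?_, hxj.1, by linarith [hxj.2]⟩
    exact Finset.mem_image_of_mem _ (Finset.mem_erase.2 ⟨hji, Finset.mem_range.2 hjM⟩)

end Grid

theorem exists_finset_cover_pow {X : Set ℝ} {M : ℝ} {N : ℕ} (hM : 1 ≤ M)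
    (hstep : ∀ a ℓ, 0 < ℓ → ℓ ≤ 1 →
      ∃ t : Finset ℝ, t.card ≤ N ∧ X ∩ Icc a (a + ℓ) ⊆ ⋃ y ∈ t, Icc y (y + ℓ / M))
    (n : ℕ) (a : ℝ) :
    ∃ t : Finset ℝ, t.card ≤ N ^ n ∧ X ∩ Icc a (a + 1) ⊆ ⋃ y ∈ t, Icc y (y + M⁻¹ ^ n) := by
  induction n with
  | zero => exact ⟨{a}, by simp, by simp⟩
  | succ n ih =>
    obtain ⟨t, htN, hXt⟩ := ih
    choose s hsN hXs using fun y => hstep y (M⁻¹ ^ n) (by positivity)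
      (pow_le_one₀ (by positivity) (inv_le_one_of_one_le₀ hM))
    refine ⟨t.biUnion s, ?_, fun x hx => ?_⟩
    · calc (t.biUnion s).card ≤ ∑ y ∈ t, (s y).card := Finset.card_biUnion_le
        _ ≤ t.card * N := Finset.sum_le_card_nsmul _ _ _ fun y _ => hsN y
        _ ≤ N ^ (n + 1) := by rw [pow_succ]; gcongr
    · obtain ⟨y, hyt, hxy⟩ := mem_iUnion₂.1 (hXt hx)
      obtain ⟨z, hzs, hxz⟩ := mem_iUnion₂.1 (hXs y ⟨hx.1, hxy⟩)
      rw [pow_succ, ← div_eq_mul_inv]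
      exact mem_iUnion₂.2 ⟨z, Finset.mem_biUnion.2 ⟨y, hyt, hzs⟩, hxz⟩

theorem dimH_le_of_forall_inter_Icc_int {X : Set ℝ} {D : ℝ≥0∞}
    (h : ∀ k : ℤ, dimH (X ∩ Icc (k : ℝ) (k + 1)) ≤ D) : dimH X ≤ D := by
  have hX : X ⊆ ⋃ k : ℤ, X ∩ Icc (k : ℝ) (k + 1) := fun x hx =>
    mem_iUnion.2 ⟨⌊x⌋, hx, Int.floor_le x, (Int.lt_floor_add_one x).le⟩
  calc dimH X ≤ dimH (⋃ k : ℤ, X ∩ Icc (k : ℝ) (k + 1)) := dimH_mono hX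
    _ = ⨆ k : ℤ, dimH (X ∩ Icc (k : ℝ) (k + 1)) := dimH_iUnion _
    _ ≤ D := iSup_le h

def IsPorous (c : ℝ) (X : Set ℝ) : Prop :=
  ∀ x ∈ X, ∀ r ∈ Ioo (0 : ℝ) 1, ∃ y : ℝ, ball y (c * r) ⊆ ball x r \ X

namespace IsPorous

variable {c : ℝ} {X : Set ℝ}

theorem exists_Icc_subset_diff (hX : IsPorous c X) (hc0 : 0 < c) (hc1 : c ≤ 1) (a : ℝ) {ℓ : ℝ}
    (hℓ0 : 0 < ℓ) (hℓ1 : ℓ ≤ 1) : ∃ u v, Icc u v ⊆ Icc a (a + ℓ) \ X ∧ c * ℓ / 3 ≤ v - u := by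
  by_cases hmid : ∃ x ∈ X, x ∈ Icc (a + ℓ / 3) (a + 2 * ℓ / 3)
  · obtain ⟨x, hxX, hx1, hx2⟩ := hmid
    obtain ⟨y, hy⟩ := hX x hxX (ℓ / 3) ⟨by linarith, by linarith⟩
    have hball : ball x (ℓ / 3) ⊆ Icc a (a + ℓ) := by
      rw [Real.ball_eq_Ioo]
      exact Ioo_subset_Icc_self.trans (Icc_subset_Icc (by linarith) (by linarith))
    refine ⟨y - c * ℓ / 6, y + c * ℓ / 6, fun z hz => ?_, by linarith⟩
    have hzy : z ∈ ball y (c * (ℓ / 3)) := by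
      rw [Real.ball_eq_Ioo]
      exact ⟨by linarith [hz.1, mul_pos hc0 hℓ0], by linarith [hz.2, mul_pos hc0 hℓ0]⟩
    exact ⟨hball (hy hzy).1, (hy hzy).2⟩
  · push Not at hmid
    refine ⟨a + ℓ / 3, a + 2 * ℓ / 3, fun z hz => ⟨?_, fun hzX => hmid z hzX hz⟩, by nlinarith⟩
    exact Icc_subset_Icc (by linarith) (by linarith) hz

theorem exists_finset_cover (hX : IsPorous c X) (hc0 : 0 < c) (hc1 : c ≤ 1) {M : ℕ}
    (hMc : 6 / c ≤ M) (a : ℝ) {ℓ : ℝ} (hℓ0 : 0 < ℓ) (hℓ1 : ℓ ≤ 1) :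
    ∃ t : Finset ℝ, t.card ≤ M - 1 ∧ X ∩ Icc a (a + ℓ) ⊆ ⋃ y ∈ t, Icc y (y + ℓ / M) := by
  have hM0 : (0 : ℝ) < M := lt_of_lt_of_le (by positivity) hMc
  have hMℓ : a + M * (ℓ / M) = a + ℓ := by rw [mul_div_cancel₀ _ hM0.ne']
  obtain ⟨u, v, hgap, hlen⟩ := hX.exists_Icc_subset_diff hc0 hc1 a hℓ0 hℓ1
  have hgrid : u + 2 * (ℓ / M) ≤ v := by
    have : ℓ / M ≤ c * ℓ / 6 := by
      rw [div_le_iff₀ hM0]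
      nlinarith [(div_le_iff₀ hc0).1 hMc]
    linarith
  obtain ⟨t, ht, hcover⟩ := exists_finset_grid_cover_diff (div_pos hℓ0 hM0)
    (hMℓ ▸ fun z hz => (hgap hz).1) hgrid
  exact ⟨t, ht, fun x ⟨hxX, hx⟩ => hcover ⟨hMℓ ▸ hx, fun hxuv => (hgap hxuv).2 hxX⟩⟩

theorem dimH_inter_Icc_le (hX : IsPorous c X) (hc0 : 0 < c) (hc1 : c ≤ 1) {M : ℕ} (hMc : 6 / c ≤ M)
    (hM : 1 < M) (a : ℝ) :
    dimH (X ∩ Icc a (a + 1)) ≤ ENNReal.ofReal (Real.logb M (M - 1 : ℕ)) := by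
  refine dimH_le_logb_of_covers (by exact_mod_cast hM) (by omega) fun n => ?_
  obtain ⟨t, ht, hcover⟩ := exists_finset_cover_pow (M := M) (by exact_mod_cast hM.le)
    (fun a ℓ hℓ0 hℓ1 => hX.exists_finset_cover hc0 hc1 hMc a hℓ0 hℓ1) n a
  refine ⟨t.image fun y => Icc y (y + (M : ℝ)⁻¹ ^ n), Finset.card_image_le.trans ht, ?_, ?_⟩
  · simp only [Finset.mem_image, forall_exists_index, and_imp]
    rintro _ y _ rfl
    rw [Real.ediam_Icc, add_sub_cancel_left]
  · simpa [sUnion_image] using hcover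

end IsPorous

/-- If `X ⊆ ℝ` is porous (there is `c ∈ (0,1)` such that every ball `B(x,r)` with
`x ∈ X` and `r ∈ (0,1)` contains a sub-ball of radius `c·r` disjoint from `X`), then
the Hausdorff dimension of `X` is strictly less than `1`. -/
theorem porous_dimH_lt_one (X : Set ℝ)
    (h : ∃ c ∈ Set.Ioo (0:ℝ) 1, ∀ x ∈ X, ∀ r ∈ Set.Ioo (0:ℝ) 1,
      ∃ y : ℝ, Metric.ball y (c * r) ⊆ Metric.ball x r \ X) :
    dimH X < 1 := by
  obtain ⟨c, ⟨hc0, hc1⟩, hX⟩ : ∃ c ∈ Ioo (0 : ℝ) 1, IsPorous c X := h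
  set M := ⌈6 / c⌉₊
  have hMc : 6 / c ≤ M := Nat.le_ceil _
  have hM : 1 < M := by
    have : (1 : ℝ) < 6 / c := by rw [lt_div_iff₀ hc0]; linarith
    exact_mod_cast this.trans_le hMc
  have hlogb : Real.logb M (M - 1 : ℕ) < 1 := by
    rw [← Real.logb_self_eq_one (b := M) (by exact_mod_cast hM)]
    exact Real.logb_lt_logb (by exact_mod_cast hM) (by exact_mod_cast (by omega : 0 < M - 1))
      (by exact_mod_cast (by omega : M - 1 < M))
  calc dimH X ≤ ENNReal.ofReal (Real.logb M (M - 1 : ℕ)) :=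
        dimH_le_of_forall_inter_Icc_int fun k => hX.dimH_inter_Icc_le hc0 hc1.le hMc hM k
    _ < 1 := ENNReal.ofReal_lt_one.2 hlogb
end
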